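/- Fix τ > 0 and codewords c_1, …, c_K ∈ ℝ^C. For any two latent vectors z_1, z_2 ∈ ℝ^C and each index k, the Gibbs soft-assignment component satisfies |p_k(z_1; τ) − p_k(z_2; τ)| ≤ (2/τ) ‖z_1 − z_2‖₂. -/

import Mathlib

/-! `gibbs c τ z` is the softmax of the scores `-dist z (c j) / τ`, and moving `z` by `d` moves
every score by at most `d / τ` (triangle inequality). Shifting all scores by at most `ε` changes
the numerator of a softmax component by a factor in `[e^{-ε}, e^ε]` and the denominator likewise,
so the component changes by a factor in `[e^{-2ε}, e^{2ε}]`; as it lies in `[0, 1]`, the absolute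
change is at most `1 - e^{-2ε} ≤ 2ε`. -/

/-- Gibbs soft assignment: `p k (z; τ) = exp(-‖z - c k‖/τ) / ∑ j exp(-‖z - c j‖/τ)`. -/
noncomputable def gibbs {C K : ℕ} (c : Fin K → EuclideanSpace ℝ (Fin C))
    (τ : ℝ) (z : EuclideanSpace ℝ (Fin C)) (k : Fin K) : ℝ :=
  Real.exp (-dist z (c k) / τ) / ∑ j, Real.exp (-dist z (c j) / τ)

open Real Finset

noncomputable def softmax {ι : Type*} [Fintype ι] (a : ι → ℝ) (k : ι) : ℝ :=
  exp (a k) / ∑ j, exp (a j)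

section Softmax

variable {ι : Type*} [Fintype ι]

lemma softmax_le_one (a : ι → ℝ) (k : ι) : softmax a k ≤ 1 :=
  div_le_one_of_le₀ (single_le_sum (fun j _ => (exp_pos (a j)).le) (mem_univ k))
    (sum_nonneg fun j _ => (exp_pos (a j)).le)

lemma softmax_nonneg (a : ι → ℝ) (k : ι) : 0 ≤ softmax a k := by
  unfold softmax
  positivity

lemma exp_neg_two_mul_mul_softmax_le {a b : ι → ℝ} {ε : ℝ} (hab : ∀ j, |a j - b j| ≤ ε)
    (k : ι) : exp (-(2 * ε)) * softmax b k ≤ softmax a k := by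
  have hnum : exp (-ε) * exp (b k) ≤ exp (a k) := by
    rw [← exp_add, exp_le_exp]
    linarith [neg_abs_le (a k - b k), hab k]
  have hden : ∑ j, exp (a j) ≤ exp ε * ∑ j, exp (b j) := by
    rw [mul_sum]
    refine sum_le_sum fun j _ => ?_
    rw [← exp_add, exp_le_exp]
    linarith [le_abs_self (a j - b j), hab j]
  have hpos : 0 < ∑ j, exp (a j) := sum_pos (fun j _ => exp_pos (a j)) ⟨k, mem_univ k⟩
  calc exp (-(2 * ε)) * softmax b k
      = exp (-ε) * exp (b k) / (exp ε * ∑ j, exp (b j)) := by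
        rw [softmax, show -(2 * ε) = -ε + -ε by ring, exp_add, exp_neg ε]
        field_simp
    _ ≤ softmax a k := div_le_div₀ (exp_pos _).le hnum hpos hden

lemma sub_softmax_le {a b : ι → ℝ} {ε : ℝ} (hab : ∀ j, |a j - b j| ≤ ε) (k : ι) :
    softmax b k - softmax a k ≤ 2 * ε :=
  calc softmax b k - softmax a k
      ≤ (1 - exp (-(2 * ε))) * softmax b k := by
        linarith [exp_neg_two_mul_mul_softmax_le hab k]
    _ ≤ 2 * ε * 1 :=
        mul_le_mul (by linarith [one_sub_le_exp_neg (2 * ε)]) (softmax_le_one b k)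
          (softmax_nonneg b k) (by linarith [(abs_nonneg _).trans (hab k)])
    _ = 2 * ε := mul_one _

lemma abs_softmax_sub_softmax_le {a b : ι → ℝ} {ε : ℝ} (hab : ∀ j, |a j - b j| ≤ ε) (k : ι) :
    |softmax a k - softmax b k| ≤ 2 * ε :=
  abs_sub_le_iff.2
    ⟨sub_softmax_le (fun j => abs_sub_comm (a j) (b j) ▸ hab j) k, sub_softmax_le hab k⟩

end Softmax

/-- **Componentwise Lipschitz continuity in `z`.** For any two latents `z₁, z₂` and any
index `k`, `|pₖ(z₁; τ) - pₖ(z₂; τ)| ≤ (2/τ) ‖z₁ - z₂‖`. -/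
theorem gibbs_component_lipschitz {C K : ℕ}
    (τ : ℝ) (hτ : 0 < τ)
    (c : Fin K → EuclideanSpace ℝ (Fin C))
    (z₁ z₂ : EuclideanSpace ℝ (Fin C)) (k : Fin K) :
    |gibbs c τ z₁ k - gibbs c τ z₂ k| ≤ (2 / τ) * dist z₁ z₂ := by
  have hscores : ∀ j, |-dist z₁ (c j) / τ - -dist z₂ (c j) / τ| ≤ dist z₁ z₂ / τ := by
    intro j
    rw [← sub_div, abs_div, abs_of_pos hτ, neg_sub_neg, abs_sub_comm]
    gcongr
    exact abs_dist_sub_le z₁ z₂ (c j)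
  calc |gibbs c τ z₁ k - gibbs c τ z₂ k| ≤ 2 * (dist z₁ z₂ / τ) :=
        abs_softmax_sub_softmax_le hscores k
    _ = (2 / τ) * dist z₁ z₂ := by ring
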